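/- With the notation of the percentile-smoothing certificate, the bound is tight for linear functions: if f(θ) = w·θ + b with w ≠ 0, then for δ = −ε·w/‖w‖₂, h_{50%}(θ+δ) = h̲_{Φ(−ε/σ)}(θ), i.e., the worst-case perturbation achieves the certified lower bound exactly. -/

import Mathlib

open MeasureTheory ProbabilityTheory

noncomputable def gaussVec (d : ℕ) (σ : ℝ) : Measure (EuclideanSpace ℝ (Fin d)) :=
  (Measure.pi fun _ : Fin d => gaussianReal 0 (⟨σ ^ 2, sq_nonneg σ⟩ : NNReal)).map
    (MeasurableEquiv.toLp 2 (Fin d → ℝ))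

/-- Standard Gaussian CDF Φ. -/
noncomputable def Phi : ℝ → ℝ := fun x => cdf (gaussianReal 0 1) x

/-- Inverse of the standard Gaussian CDF. -/
noncomputable def PhiInv : ℝ → ℝ := Function.invFun Phi

/-- Lower percentile smoothing. -/
noncomputable def lowerPct {d : ℕ} (μ : Measure (EuclideanSpace ℝ (Fin d)))
    (f : EuclideanSpace ℝ (Fin d) → ℝ) (p : ℝ) (x : EuclideanSpace ℝ (Fin d)) : ℝ :=
  sSup {y : ℝ | (μ {g | f (x + g) ≤ y}).toReal ≤ p}

/-- Upper percentile smoothing. -/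
noncomputable def upperPct {d : ℕ} (μ : Measure (EuclideanSpace ℝ (Fin d)))
    (f : EuclideanSpace ℝ (Fin d) → ℝ) (p : ℝ) (x : EuclideanSpace ℝ (Fin d)) : ℝ :=
  sInf {y : ℝ | p ≤ (μ {g | f (x + g) ≤ y}).toReal}



section Aux
open Real Set
open scoped ENNReal NNReal

lemma lintegral_fin_prod {n : ℕ} (μ : Measure ℝ) [SigmaFinite μ]
    (f : Fin n → ℝ → ℝ≥0∞) (hf : ∀ i, Measurable (f i)) :
    ∫⁻ x : Fin n → ℝ, ∏ i, f i (x i) ∂(Measure.pi fun _ => μ) = ∏ i, ∫⁻ y, f i y ∂μ := by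
  induction n with
  | zero => simp [Measure.pi_of_empty]
  | succ n ih =>
    have h := (measurePreserving_piFinSuccAbove (fun _ : Fin (n+1) => μ) 0).symm
    calc ∫⁻ x : Fin (n+1) → ℝ, ∏ i, f i (x i) ∂(Measure.pi fun _ => μ)
        = ∫⁻ y : ℝ × (Fin n → ℝ), ∏ i, f i ((MeasurableEquiv.piFinSuccAbove (fun _ => ℝ) 0).symm y i)
            ∂(μ.prod (Measure.pi fun _ => μ)) := by
          rw [← h.map_eq, lintegral_map (f := fun x : Fin (n+1) → ℝ => ∏ i, f i (x i))
            (Finset.measurable_prod _ fun (i : Fin (n+1)) _ => (hf i).comp (measurable_pi_apply i))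
            (MeasurableEquiv.measurable _)]
      _ = ∫⁻ y : ℝ × (Fin n → ℝ), f 0 y.1 * ∏ i : Fin n, f i.succ (y.2 i)
            ∂(μ.prod (Measure.pi fun _ => μ)) := by
          congr 1; funext y
          simp_rw [MeasurableEquiv.piFinSuccAbove_symm_apply, Fin.insertNthEquiv,
            Fin.prod_univ_succ, Fin.insertNth_zero]
          simp [Fin.zero_succAbove]
      _ = (∫⁻ y, f 0 y ∂μ) * ∫⁻ x : Fin n → ℝ, ∏ i : Fin n, f i.succ (x i)
            ∂(Measure.pi fun _ => μ) := by
          exact lintegral_prod_mul (hf 0).aemeasurable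
            (show Measurable fun x : Fin n → ℝ => ∏ i : Fin n, f i.succ (x i) from
              Finset.measurable_prod _ fun (i : Fin n) _ => (hf i.succ).comp (measurable_pi_apply i)).aemeasurable
      _ = ∏ i, ∫⁻ y, f i y ∂μ := by rw [ih _ (fun i => hf i.succ), Fin.prod_univ_succ]

lemma map_withDensity_equiv {α β : Type*} [MeasurableSpace α] [MeasurableSpace β]
    (e : α ≃ᵐ β) (μ : Measure α) (g : β → ℝ≥0∞) (hg : Measurable g) :
    Measure.map e (μ.withDensity (g ∘ e)) = (Measure.map e μ).withDensity g := by
  ext s hs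
  rw [Measure.map_apply e.measurable hs, withDensity_apply _ (e.measurable hs),
    withDensity_apply _ hs, setLIntegral_map hs hg e.measurable]
  rfl

lemma pi_gauss_withDensity (d : ℕ) (v : ℝ≥0) (hv : v ≠ 0) :
    (Measure.pi fun _ : Fin d => gaussianReal 0 v) =
      (Measure.pi fun _ : Fin d => (volume : Measure ℝ)).withDensity
        (fun x => ∏ i, gaussianPDF 0 v (x i)) := by
  refine Measure.pi_eq (fun s hs => ?_)
  rw [withDensity_apply _ (MeasurableSet.univ_pi hs)]
  have key : ∀ x : Fin d → ℝ, (Set.pi univ s).indicator (fun x => ∏ i, gaussianPDF 0 v (x i)) x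
      = ∏ i, (s i).indicator (gaussianPDF 0 v) (x i) := by
    intro x
    by_cases hx : x ∈ Set.pi univ s
    · rw [Set.indicator_of_mem hx]
      exact Finset.prod_congr rfl fun i _ =>
        (Set.indicator_of_mem (hx i (mem_univ i)) _).symm
    · rw [Set.indicator_of_notMem hx]
      have : ∃ i, x i ∉ s i := by
        by_contra hc
        push_neg at hc
        exact hx (fun i _ => hc i)
      obtain ⟨i, hi⟩ := this
      exact (Finset.prod_eq_zero (Finset.mem_univ i)
        (by rw [Set.indicator_of_notMem hi])).symm
  calc (∫⁻ x in univ.pi s, ∏ i, gaussianPDF 0 v (x i) ∂(Measure.pi fun _ => (volume : Measure ℝ)))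
      = ∫⁻ x, ∏ i, (s i).indicator (gaussianPDF 0 v) (x i)
          ∂(Measure.pi fun _ => (volume : Measure ℝ)) := by
        exact (lintegral_indicator (MeasurableSet.univ_pi hs) _).symm.trans
          (lintegral_congr key)
    _ = ∏ i, ∫⁻ y, (s i).indicator (gaussianPDF 0 v) y := by
        exact lintegral_fin_prod _ _ fun i => (measurable_gaussianPDF 0 v).indicator (hs i)
    _ = ∏ i : Fin d, (gaussianReal 0 v) (s i) := by
        refine Finset.prod_congr rfl fun i _ => ?_
        rw [lintegral_indicator (hs i), gaussianReal_of_var_ne_zero 0 hv,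
          withDensity_apply _ (hs i)]

noncomputable def rhoE (d : ℕ) (σ : ℝ) (x : EuclideanSpace ℝ (Fin d)) : ℝ≥0∞ :=
  ENNReal.ofReal ((Real.sqrt (2 * π * σ ^ 2))⁻¹ ^ d * Real.exp (-‖x‖ ^ 2 / (2 * σ ^ 2)))

lemma measurable_rhoE (d : ℕ) (σ : ℝ) : Measurable (rhoE d σ) := by
  apply Measurable.ennreal_ofReal
  fun_prop

lemma gaussVec_eq_withDensity (d : ℕ) {σ : ℝ} (hσ : 0 < σ) :
    gaussVec d σ = (volume : Measure (EuclideanSpace ℝ (Fin d))).withDensity (rhoE d σ) := by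
  have hv : (⟨σ ^ 2, sq_nonneg σ⟩ : NNReal) ≠ 0 := by
    intro h
    exact pow_ne_zero 2 hσ.ne' (congrArg Subtype.val h)
  set v : NNReal := ⟨σ ^ 2, sq_nonneg σ⟩ with hvdef
  have hcomp : (fun x : Fin d → ℝ => ∏ i, gaussianPDF 0 v (x i)) =
      (rhoE d σ) ∘ (MeasurableEquiv.toLp 2 (Fin d → ℝ)) := by
    funext x
    have hx : ∀ i, ((MeasurableEquiv.toLp 2 (Fin d → ℝ)) x) i = x i := fun i => rfl
    simp only [Function.comp_apply, rhoE]
    have hnorm : ‖(MeasurableEquiv.toLp 2 (Fin d → ℝ)) x‖ ^ 2 = ∑ i, (x i) ^ 2 := by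
      rw [EuclideanSpace.norm_eq]
      rw [Real.sq_sqrt (by positivity)]
      exact Finset.sum_congr rfl fun i _ => by rw [hx i, Real.norm_eq_abs, sq_abs]
    rw [hnorm]
    unfold gaussianPDF gaussianPDFReal
    rw [← ENNReal.ofReal_prod_of_nonneg (fun i _ => by positivity)]
    congr 1
    have hcv : (v : ℝ) = σ ^ 2 := rfl
    rw [Finset.prod_mul_distrib, Finset.prod_const]
    congr 1
    · simp [hcv]
    · rw [← Real.exp_sum]
      congr 1
      simp only [sub_zero, hcv]
      rw [← Finset.sum_neg_distrib, Finset.sum_div]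
  rw [gaussVec, pi_gauss_withDensity d v hv, hcomp,
    map_withDensity_equiv _ _ _ (measurable_rhoE d σ), ← volume_pi,
    MeasurableEquiv.coe_toLp, (PiLp.volume_preserving_toLp (Fin d)).map_eq]

lemma gaussVec_map_isometry (d : ℕ) {σ : ℝ} (hσ : 0 < σ)
    (T : EuclideanSpace ℝ (Fin d) ≃ₗᵢ[ℝ] EuclideanSpace ℝ (Fin d)) :
    Measure.map T (gaussVec d σ) = gaussVec d σ := by
  have hrho : rhoE d σ ∘ T.toMeasurableEquiv = rhoE d σ := by
    funext x
    simp only [Function.comp_apply, rhoE, LinearIsometryEquiv.coe_toMeasurableEquiv,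
      T.norm_map]
  rw [gaussVec_eq_withDensity d hσ]
  calc Measure.map T ((volume : Measure (EuclideanSpace ℝ (Fin d))).withDensity (rhoE d σ))
      = Measure.map T.toMeasurableEquiv (volume.withDensity (rhoE d σ ∘ T.toMeasurableEquiv)) := by
        rw [hrho]; rfl
    _ = (Measure.map T.toMeasurableEquiv volume).withDensity (rhoE d σ) :=
        map_withDensity_equiv _ _ _ (measurable_rhoE d σ)
    _ = volume.withDensity (rhoE d σ) := by
        congr 1
        exact T.measurePreserving.map_eq

lemma gaussVec_map_eval (d : ℕ) (σ : ℝ) (i : Fin d) :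
    Measure.map (fun x : EuclideanSpace ℝ (Fin d) => x i) (gaussVec d σ) =
      gaussianReal 0 (⟨σ ^ 2, sq_nonneg σ⟩ : NNReal) := by
  set v : NNReal := ⟨σ ^ 2, sq_nonneg σ⟩
  have hmeas : Measurable (fun x : EuclideanSpace ℝ (Fin d) => x i) :=
    (measurable_pi_apply i).comp (MeasurableEquiv.toLp 2 (Fin d → ℝ)).symm.measurable
  rw [gaussVec, Measure.map_map hmeas (MeasurableEquiv.measurable _)]
  have hfun : ((fun x : EuclideanSpace ℝ (Fin d) => x i) ∘
      (MeasurableEquiv.toLp 2 (Fin d → ℝ))) = fun y : Fin d → ℝ => y i := rfl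
  rw [hfun]
  ext s hs
  rw [Measure.map_apply (measurable_pi_apply i) hs]
  have hpre : (fun y : Fin d → ℝ => y i) ⁻¹' s =
      Set.pi univ (Function.update (fun _ => (univ : Set ℝ)) i s) := by
    rw [← Set.eval_preimage]
  rw [hpre, Measure.pi_pi (μ := fun _ => gaussianReal 0 v)]
  rw [Finset.prod_eq_single_of_mem i (Finset.mem_univ i)
    (fun j _ hj => by simp [Function.update_of_ne hj])]
  simp

lemma gaussVec_map_inner (d : ℕ) {σ : ℝ} (hσ : 0 < σ)
    (w : EuclideanSpace ℝ (Fin d)) (hw : w ≠ 0) :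
    Measure.map (fun g : EuclideanSpace ℝ (Fin d) => (inner ℝ w g : ℝ)) (gaussVec d σ) =
      gaussianReal 0 (⟨(σ * ‖w‖) ^ 2, sq_nonneg _⟩ : NNReal) := by
  have hd : 0 < d := by
    rcases Nat.eq_zero_or_pos d with h | h
    · exfalso; apply hw; subst h
      apply Subsingleton.elim
    · exact h
  set i₀ : Fin d := ⟨0, hd⟩
  set u : EuclideanSpace ℝ (Fin d) := ‖w‖⁻¹ • w with hu
  have hnw : ‖w‖ ≠ 0 := norm_ne_zero_iff.mpr hw
  have hun : ‖u‖ = 1 := by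
    rw [hu, norm_smul, norm_inv, norm_norm, inv_mul_cancel₀ hnw]
  -- orthonormal basis with b i₀ = u
  have hcard : Module.finrank ℝ (EuclideanSpace ℝ (Fin d)) = Fintype.card (Fin d) := by
    simp
  have horth : Orthonormal ℝ (({i₀} : Set (Fin d)).restrict (fun _ => u)) := by
    constructor
    · intro i; exact hun
    · intro i j hij
      exfalso
      exact hij (Subsingleton.elim i j)
  obtain ⟨bb, hbb⟩ := Orthonormal.exists_orthonormalBasis_extension_of_card_eq hcard horth
  have hb0 : bb i₀ = u := hbb i₀ rfl
  have hinner : (fun g : EuclideanSpace ℝ (Fin d) => (inner ℝ w g : ℝ)) =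
      (fun t : ℝ => ‖w‖ * t) ∘ (fun y : EuclideanSpace ℝ (Fin d) => y i₀) ∘ ⇑bb.repr := by
    funext g
    simp only [Function.comp_apply]
    have : (bb.repr g) i₀ = (inner ℝ u g : ℝ) := by
      rw [← hb0]
      exact bb.repr_apply_apply g i₀
    rw [this, hu, real_inner_smul_left]
    field_simp
  have hrepr : Measurable (⇑bb.repr : EuclideanSpace ℝ (Fin d) → EuclideanSpace ℝ (Fin d)) :=
    bb.repr.continuous.measurable
  have heval : Measurable (fun y : EuclideanSpace ℝ (Fin d) => y i₀) :=
    (measurable_pi_apply i₀).comp (MeasurableEquiv.toLp 2 (Fin d → ℝ)).symm.measurable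
  have hmul : Measurable (fun t : ℝ => ‖w‖ * t) := by fun_prop
  rw [hinner,
    show ((fun t : ℝ => ‖w‖ * t) ∘ (fun y : EuclideanSpace ℝ (Fin d) => y i₀) ∘ ⇑bb.repr)
      = (((fun t : ℝ => ‖w‖ * t) ∘ (fun y : EuclideanSpace ℝ (Fin d) => y i₀)) ∘ ⇑bb.repr) from rfl,
    ← Measure.map_map (hmul.comp heval) hrepr,
    gaussVec_map_isometry d hσ bb.repr,
    ← Measure.map_map hmul heval,
    gaussVec_map_eval d σ i₀,
    gaussianReal_map_const_mul (μ := 0) (v := ⟨σ ^ 2, sq_nonneg σ⟩) (‖w‖)]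
  congr 1
  · ring
  · ext
    push_cast
    exact (show ‖w‖ ^ 2 * σ ^ 2 = (σ * ‖w‖) ^ 2 by ring)

lemma gaussianReal_Ioc_ne_zero {a b : ℝ} (hab : a < b) :
    gaussianReal 0 1 (Ioc a b) ≠ 0 := by
  rw [gaussianReal_of_var_ne_zero 0 one_ne_zero, Ne,
    withDensity_apply_eq_zero (measurable_gaussianPDF 0 1)]
  have : {x : ℝ | gaussianPDF 0 1 x ≠ 0} = univ := by
    ext x; simpa using (gaussianPDF_pos 0 one_ne_zero x).ne'
  rw [this, univ_inter, Real.volume_Ioc]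
  simp only [ne_eq, ENNReal.ofReal_eq_zero, not_le]
  linarith

lemma Phi_strictMono : StrictMono Phi := by
  intro a b hab
  have h1 : Iic a ∪ Ioc a b = Iic b := Set.Iic_union_Ioc_eq_Iic hab.le
  have hdisj : Disjoint (Iic a) (Ioc a b) := by
    apply Set.disjoint_left.mpr
    intro x hx hx2
    exact absurd hx2.1 (not_lt.mpr hx)
  have hm : gaussianReal 0 1 (Iic b) = gaussianReal 0 1 (Iic a) + gaussianReal 0 1 (Ioc a b) := by
    rw [← h1, measure_union hdisj measurableSet_Ioc]
  simp only [Phi, cdf_eq_real, measureReal_def]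
  apply (ENNReal.toReal_lt_toReal (measure_ne_top _ _) (measure_ne_top _ _)).mpr
  rw [hm]
  exact ENNReal.lt_add_right (measure_ne_top _ _) (gaussianReal_Ioc_ne_zero hab)

lemma Phi_zero : Phi 0 = 1 / 2 := by
  set μ := gaussianReal 0 1 with hμ
  have hmap : Measure.map (fun x : ℝ => -1 * x) μ = μ := by
    rw [hμ, gaussianReal_map_const_mul (-1)]
    norm_num
  have h1 : μ (Ici 0) = μ (Iic 0) := by
    conv_rhs => rw [← hmap]
    rw [Measure.map_apply (by fun_prop) measurableSet_Iic]
    congr 1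
    ext x; simp
  have h0 : μ {(0:ℝ)} = 0 := by
    rw [hμ, gaussianReal_of_var_ne_zero 0 one_ne_zero,
      withDensity_apply_eq_zero (measurable_gaussianPDF 0 1)]
    exact measure_mono_null (inter_subset_right) (Real.volume_singleton)
  have h2 : μ (Ici 0) = μ (Ioi 0) := by
    have : Ici (0:ℝ) = Ioi 0 ∪ {0} := by
      ext x; simp [le_iff_lt_or_eq, eq_comm, or_comm]
    rw [this, measure_union (by simp) (measurableSet_singleton 0), h0, add_zero]
  have h3 : μ (Iic 0) + μ (Ioi 0) = 1 := by
    rw [← Set.compl_Iic, measure_add_measure_compl measurableSet_Iic]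
    exact measure_univ
  have h4 : μ (Iic 0) + μ (Iic 0) = 1 := by rwa [← h2, h1] at h3
  have h5 := congrArg ENNReal.toReal h4
  rw [ENNReal.toReal_add (measure_ne_top _ _) (measure_ne_top _ _), ENNReal.toReal_one] at h5
  have : Phi 0 = (μ (Iic 0)).toReal := by rw [Phi, cdf_eq_real, measureReal_def]
  rw [this]; linarith

lemma gaussVec_inner_cdf (d : ℕ) {σ : ℝ} (hσ : 0 < σ)
    (w : EuclideanSpace ℝ (Fin d)) (hw : w ≠ 0) (t : ℝ) :
    ((gaussVec d σ) {g | (inner ℝ w g : ℝ) ≤ t}).toReal = Phi (t / (σ * ‖w‖)) := by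
  have hc : 0 < σ * ‖w‖ := mul_pos hσ (norm_pos_iff.mpr hw)
  have hmeas : Measurable (fun g : EuclideanSpace ℝ (Fin d) => (inner ℝ w g : ℝ)) :=
    (continuous_const.inner continuous_id).measurable
  have hset : {g : EuclideanSpace ℝ (Fin d) | (inner ℝ w g : ℝ) ≤ t} =
      (fun g : EuclideanSpace ℝ (Fin d) => (inner ℝ w g : ℝ)) ⁻¹' Iic t := rfl
  rw [hset, ← Measure.map_apply hmeas measurableSet_Iic, gaussVec_map_inner d hσ w hw]
  have hstd : gaussianReal 0 (⟨(σ * ‖w‖) ^ 2, sq_nonneg _⟩ : NNReal) =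
      Measure.map (fun x : ℝ => (σ * ‖w‖) * x) (gaussianReal 0 1) := by
    rw [gaussianReal_map_const_mul (σ * ‖w‖)]
    norm_num
    rfl
  rw [hstd, Measure.map_apply (by fun_prop) measurableSet_Iic]
  have hpre : (fun x : ℝ => (σ * ‖w‖) * x) ⁻¹' Iic t = Iic (t / (σ * ‖w‖)) := by
    ext x
    simp only [mem_preimage, mem_Iic]
    rw [le_div_iff₀ hc, mul_comm]
  rw [hpre, Phi, cdf_eq_real, measureReal_def]

end Aux

theorem certificate_tight_for_linear (d : ℕ) (σ ε b : ℝ) (hσ : 0 < σ) (hε : 0 < ε)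
    (w : EuclideanSpace ℝ (Fin d)) (hw : w ≠ 0)
    (f : EuclideanSpace ℝ (Fin d) → ℝ)
    (hf : ∀ θ, f θ = (inner ℝ w θ : ℝ) + b)
    (θ : EuclideanSpace ℝ (Fin d)) :
    lowerPct (gaussVec d σ) f (1 / 2) (θ + -((ε / ‖w‖) • w)) =
      lowerPct (gaussVec d σ) f (Phi (-ε / σ)) θ := by
  have hnw : (0:ℝ) < ‖w‖ := norm_pos_iff.mpr hw
  have hc : 0 < σ * ‖w‖ := mul_pos hσ hnw
  have hset : ∀ (x : EuclideanSpace ℝ (Fin d)) (y : ℝ),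
      {g : EuclideanSpace ℝ (Fin d) | f (x + g) ≤ y} =
      {g : EuclideanSpace ℝ (Fin d) | (inner ℝ w g : ℝ) ≤ y - (inner ℝ w x : ℝ) - b} := by
    intro x y
    ext g
    simp only [Set.mem_setOf_eq, hf, inner_add_right]
    constructor <;> intro h <;> linarith
  have hδ : (inner ℝ w (θ + -((ε / ‖w‖) • w)) : ℝ) = (inner ℝ w θ : ℝ) - ε * ‖w‖ := by
    rw [inner_add_right, inner_neg_right, real_inner_smul_right,
      real_inner_self_eq_norm_mul_norm]
    field_simp
    ring
  unfold lowerPct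
  apply congrArg
  ext y
  simp only [Set.mem_setOf_eq, hset, gaussVec_inner_cdf d hσ w hw]
  rw [hδ]
  set m : ℝ := (inner ℝ w θ : ℝ) + b with hm
  have lhs_iff : Phi ((y - ((inner ℝ w θ : ℝ) - ε * ‖w‖) - b) / (σ * ‖w‖)) ≤ 1 / 2 ↔
      y ≤ m - ε * ‖w‖ := by
    rw [← Phi_zero, Phi_strictMono.le_iff_le, div_le_iff₀ hc]
    constructor <;> intro h <;> [nlinarith; nlinarith]
  have rhs_iff : Phi ((y - (inner ℝ w θ : ℝ) - b) / (σ * ‖w‖)) ≤ Phi (-ε / σ) ↔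
      y ≤ m - ε * ‖w‖ := by
    rw [Phi_strictMono.le_iff_le, div_le_iff₀ hc,
      show (-ε / σ) * (σ * ‖w‖) = -(ε * ‖w‖) by field_simp]
    constructor <;> intro h <;> [skip; skip] <;> simp only [hm] at * <;> linarith
  rw [lhs_iff, rhs_iff]
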